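/- arXiv:cs/0605139 — 2 statements merged into one kernel-verified Lean document; each statement's English description precedes it below -/
import Mathlib

section
/- Let n = 2t+1 be an odd positive integer and f a balanced Boolean function of n variables. If f does not have any annihilator of degree less than t+1, then f⊕1 also has no annihilator of degree less than t+1; consequently AI(f) = t+1. -/
/-- Hamming weight of a point of `F_2^n`. -/
def wtB {n : ℕ} (X : Fin n → ZMod 2) : ℕ :=
  (Finset.univ.filter (fun i => X i = 1)).card

/-- Coefficient of the monomial `∏_{i ∈ S} x_i` in the algebraic normal form of `f`. -/
def anfCoeff {n : ℕ} (f : (Fin n → ZMod 2) → ZMod 2) (S : Finset (Fin n)) : ZMod 2 :=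
  ∑ x ∈ Finset.univ.filter (fun x : Fin n → ZMod 2 => ∀ i, x i = 1 → i ∈ S), f x

/-- Algebraic degree of a Boolean function (degree of its ANF). -/
def degB {n : ℕ} (f : (Fin n → ZMod 2) → ZMod 2) : ℕ :=
  (Finset.univ.filter (fun S : Finset (Fin n) => anfCoeff f S ≠ 0)).sup Finset.card

/-- `g` is an annihilator of `f` : `g` is nonzero and `f · g = 0`. -/
def IsAnnihilator {n : ℕ} (f g : (Fin n → ZMod 2) → ZMod 2) : Prop :=
  g ≠ 0 ∧ ∀ x, f x * g x = 0

/-- Algebraic immunity: minimal degree of an annihilator of `f` or of `f ⊕ 1`. -/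
noncomputable def AI {n : ℕ} (f : (Fin n → ZMod 2) → ZMod 2) : ℕ :=
  sInf {d | ∃ g, (IsAnnihilator f g ∨ IsAnnihilator (fun x => f x + 1) g) ∧ degB g = d}

/-- Matrix whose rows (indexed by the set `T`) are the evaluation vectors `v(X)`, `X ∈ T`,
of all monomials of degree at most `D`. -/
def VSet {n : ℕ} (D : ℕ) (T : Set (Fin n → ZMod 2)) :
    Matrix T {S : Finset (Fin n) // S.card ≤ D} (ZMod 2) :=
  fun x S => ∏ i ∈ S.1, (x : Fin n → ZMod 2) i

/-- Matrix whose rows (listed according to the enumeration `Y`) are the evaluation vectors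
`v(Y r)` of all monomials of degree at most `D`. -/
def VEnum {n : ℕ} (D : ℕ) {N : ℕ} (Y : Fin N → (Fin n → ZMod 2)) :
    Matrix (Fin N) {S : Finset (Fin n) // S.card ≤ D} (ZMod 2) :=
  fun r S => ∏ i ∈ S.1, Y r i

/-!
Let `T = supp f`, of size `2^(n-1)`, which is also the number of monomials of degree `≤ t`.
An annihilator of `f` of degree `≤ t` is exactly a nonzero kernel vector of the evaluation
matrix `VSet t T`, so that square matrix is invertible: for each `x₀ ∈ T` some `h` of degree
`≤ t` is the indicator of `x₀` on `T`. An annihilator `g` of `f ⊕ 1` is supported in `T`, so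
with `g x₀ = 1` we get `∑ₓ g h = 1`. But `∑ₓ F x` is the ANF coefficient of `x₁ ⋯ xₙ` of `F`,
which vanishes when `deg F < n`; since `deg (g h) ≤ deg g + t`, this forces `deg g ≥ t + 1`.
Finally there are more than `2^(n-1)` monomials of degree `≤ t + 1`, so `VSet (t + 1) T` has a
kernel and `f` has an annihilator of degree `t + 1`.
-/

open Finset

namespace BooleanFunction

variable {n : ℕ}

def monomial (S : Finset (Fin n)) (x : Fin n → ZMod 2) : ZMod 2 := ∏ i ∈ S, x i

lemma monomial_eq_ite (S : Finset (Fin n)) (x : Fin n → ZMod 2) :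
    monomial S x = if ∀ i ∈ S, x i = 1 then 1 else 0 := by
  have hbool : ∀ v : ZMod 2, v = if v = 1 then 1 else 0 := by decide
  rw [monomial, Finset.prod_congr rfl fun i _ => hbool (x i)]
  convert Finset.prod_boole

lemma monomial_union (S T : Finset (Fin n)) (x : Fin n → ZMod 2) :
    monomial (S ∪ T) x = monomial S x * monomial T x := by
  simp only [monomial_eq_ite, ite_zero_mul_ite_zero, mul_one, Finset.forall_mem_union]

lemma anfCoeff_monomial (A T : Finset (Fin n)) :
    anfCoeff (monomial A) T = if A = T then 1 else 0 := by
  -- The sum over `x` factors over the coordinates; coordinate `i` contributes `[i ∈ A ↔ i ∈ T]`.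
  let φ : Fin n → ZMod 2 → ZMod 2 := fun i v =>
    (if v = 1 → i ∈ T then 1 else 0) * if i ∈ A then v else 1
  have hterm (x : Fin n → ZMod 2) :
      (if ∀ i, x i = 1 → i ∈ T then monomial A x else 0) = ∏ i, φ i (x i) := by
    rw [Finset.prod_mul_distrib, Fintype.prod_boole, Fintype.prod_ite_mem, ite_mul, one_mul,
      zero_mul, monomial]
    congr
  have hfactor (i : Fin n) : ∑ v, φ i v = if i ∈ A ↔ i ∈ T then 1 else 0 := by
    rw [show ∑ v, φ i v = φ i 0 + φ i 1 from Fin.sum_univ_two _]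
    by_cases hA : i ∈ A <;> by_cases hT : i ∈ T <;> simp [φ, hA, hT, CharTwo.add_self_eq_zero]
  rw [anfCoeff, Finset.sum_filter, Finset.sum_congr rfl fun x _ => hterm x, ← Fintype.prod_sum,
    Finset.prod_congr rfl fun i _ => hfactor i]
  simp_rw [Fintype.prod_boole, ← Finset.ext_iff]

lemma anfCoeff_sum_smul {ι : Type*} [Fintype ι] (c : ι → ZMod 2)
    (F : ι → (Fin n → ZMod 2) → ZMod 2) (T : Finset (Fin n)) :
    anfCoeff (∑ i, c i • F i) T = ∑ i, c i * anfCoeff (F i) T := by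
  simp only [anfCoeff, Finset.sum_apply, Pi.smul_apply, smul_eq_mul, Finset.mul_sum]
  exact Finset.sum_comm

lemma card_le_degB {f : (Fin n → ZMod 2) → ZMod 2} {S : Finset (Fin n)}
    (h : anfCoeff f S ≠ 0) : S.card ≤ degB f :=
  Finset.le_sup (Finset.mem_filter.2 ⟨Finset.mem_univ _, h⟩)

lemma anfCoeff_eq_zero_of_degB_lt {f : (Fin n → ZMod 2) → ZMod 2} {S : Finset (Fin n)}
    (h : degB f < S.card) : anfCoeff f S = 0 := by
  by_contra hS
  exact (card_le_degB hS).not_gt h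

lemma degB_le_iff {f : (Fin n → ZMod 2) → ZMod 2} {D : ℕ} :
    degB f ≤ D ↔ ∀ S, anfCoeff f S ≠ 0 → S.card ≤ D := by
  simp [degB, Finset.sup_le_iff]

lemma sum_eq_anfCoeff_univ (f : (Fin n → ZMod 2) → ZMod 2) :
    ∑ x, f x = anfCoeff f univ := by
  simp [anfCoeff]

lemma sum_eq_zero_of_degB_lt {f : (Fin n → ZMod 2) → ZMod 2} (h : degB f < n) :
    ∑ x, f x = 0 := by
  rw [sum_eq_anfCoeff_univ]
  exact anfCoeff_eq_zero_of_degB_lt (by simpa using h)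

def ofAnfCoeffs (D : ℕ) :
    ({S : Finset (Fin n) // S.card ≤ D} → ZMod 2) →ₗ[ZMod 2] (Fin n → ZMod 2) → ZMod 2 :=
  Fintype.linearCombination (ZMod 2) fun S => monomial S.1

lemma anfCoeff_ofAnfCoeffs (D : ℕ) (c : {S : Finset (Fin n) // S.card ≤ D} → ZMod 2)
    (T : Finset (Fin n)) :
    anfCoeff (ofAnfCoeffs D c) T = if h : T.card ≤ D then c ⟨T, h⟩ else 0 := by
  simp only [ofAnfCoeffs, Fintype.linearCombination_apply, anfCoeff_sum_smul, anfCoeff_monomial,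
    mul_ite, mul_one, mul_zero]
  split_ifs with h
  · rw [Fintype.sum_eq_single ⟨T, h⟩ fun S hS => if_neg fun e => hS (Subtype.ext e), if_pos rfl]
  · exact Finset.sum_eq_zero fun S _ => if_neg fun (e : S.1 = T) => h (e ▸ S.2)

@[simp]
lemma anfCoeff_ofAnfCoeffs_coe (D : ℕ) (c : {S : Finset (Fin n) // S.card ≤ D} → ZMod 2)
    (S : {S : Finset (Fin n) // S.card ≤ D}) : anfCoeff (ofAnfCoeffs D c) S = c S := by
  rw [anfCoeff_ofAnfCoeffs, dif_pos S.2]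

lemma ofAnfCoeffs_injective (D : ℕ) : Function.Injective (ofAnfCoeffs (n := n) D) :=
  fun c c' h => funext fun S => by simpa using congrArg (anfCoeff · S) h

lemma degB_ofAnfCoeffs_le (D : ℕ) (c : {S : Finset (Fin n) // S.card ≤ D} → ZMod 2) :
    degB (ofAnfCoeffs D c) ≤ D := by
  refine degB_le_iff.2 fun S hS => ?_
  by_contra h
  rw [anfCoeff_ofAnfCoeffs, dif_neg h] at hS
  exact hS rfl

lemma ofAnfCoeffs_surjective {D : ℕ} (hD : n ≤ D) :
    Function.Surjective (ofAnfCoeffs (n := n) D) := by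
  have hall : ∀ S : Finset (Fin n), S.card ≤ D := fun S => (card_le_univ S).trans (by simpa)
  refine ((Nat.bijective_iff_injective_and_card _).2 ⟨ofAnfCoeffs_injective D, ?_⟩).2
  simp [Fintype.card_congr (Equiv.subtypeUnivEquiv hall)]

lemma anfCoeff_injective : Function.Injective (anfCoeff (n := n)) := by
  intro f g hfg
  obtain ⟨c, rfl⟩ := ofAnfCoeffs_surjective le_rfl f
  obtain ⟨c', rfl⟩ := ofAnfCoeffs_surjective le_rfl g
  exact congrArg _ (funext fun S => by simpa using congrFun hfg S)

lemma ofAnfCoeffs_anfCoeff {f : (Fin n → ZMod 2) → ZMod 2} {D : ℕ} (hf : degB f ≤ D) :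
    ofAnfCoeffs D (fun S => anfCoeff f S) = f := by
  refine anfCoeff_injective (funext fun T => ?_)
  rw [anfCoeff_ofAnfCoeffs]
  split_ifs with h
  · rfl
  · exact (anfCoeff_eq_zero_of_degB_lt (by omega)).symm

lemma degB_mul_le (g h : (Fin n → ZMod 2) → ZMod 2) : degB (g * h) ≤ degB g + degB h := by
  have hexpand : g * h = ∑ p : {S : Finset (Fin n) // S.card ≤ degB g} ×
      {T : Finset (Fin n) // T.card ≤ degB h},
      (anfCoeff g p.1 * anfCoeff h p.2) • monomial (p.1.1 ∪ p.2.1) := by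
    conv_lhs =>
      rw [← ofAnfCoeffs_anfCoeff le_rfl (f := g), ← ofAnfCoeffs_anfCoeff le_rfl (f := h)]
    ext x
    simp only [Pi.mul_apply, ofAnfCoeffs, Fintype.linearCombination_apply, Finset.sum_apply,
      Pi.smul_apply, smul_eq_mul, Finset.sum_mul_sum, Fintype.sum_prod_type, monomial_union]
    exact Finset.sum_congr rfl fun S _ => Finset.sum_congr rfl fun T _ => by ring
  refine degB_le_iff.2 fun U hU => ?_
  rw [hexpand, anfCoeff_sum_smul] at hU
  obtain ⟨⟨S, T⟩, -, hST⟩ := Finset.exists_ne_zero_of_sum_ne_zero hU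
  have hunion : S.1 ∪ T.1 = U := by
    by_contra hne
    simp [anfCoeff_monomial, hne] at hST
  calc U.card ≤ S.1.card + T.1.card := hunion ▸ card_union_le _ _
    _ ≤ degB g + degB h := add_le_add S.2 T.2

lemma card_finset_card_le_half {t : ℕ} (hn : n = 2 * t + 1) :
    Nat.card {S : Finset (Fin n) // S.card ≤ t} = 2 ^ (n - 1) := by
  have hcompl : Fintype.card {S : Finset (Fin n) // S.card ≤ t} =
      Fintype.card {S : Finset (Fin n) // ¬ S.card ≤ t} :=
    Fintype.card_congr <| (compl_involutive.toPerm _).subtypeEquiv fun S => by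
      simp only [Function.Involutive.coe_toPerm, card_compl, Fintype.card_fin]
      omega
  rw [Fintype.card_subtype_compl, Fintype.card_finset, Fintype.card_fin] at hcompl
  have hpow : 2 ^ n = 2 * 2 ^ (n - 1) := by
    rw [hn, Nat.add_sub_cancel, pow_succ, mul_comm]
  rw [Nat.card_eq_fintype_card]
  omega

lemma card_finset_card_le_lt_succ {t : ℕ} (ht : t < n) :
    Nat.card {S : Finset (Fin n) // S.card ≤ t} <
      Nat.card {S : Finset (Fin n) // S.card ≤ t + 1} := by
  obtain ⟨S, -, hS⟩ := exists_subset_card_eq (s := (univ : Finset (Fin n))) (n := t + 1)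
    (by simpa using ht)
  simp only [Nat.card_eq_fintype_card]
  refine Fintype.card_lt_of_injective_of_notMem _ (Subtype.impEmbedding _ _ fun _ h => h.trans
    t.le_succ).injective (b := ⟨S, hS.le⟩) ?_
  rintro ⟨U, hU⟩
  have hUS : U.1 = S := congrArg Subtype.val hU
  exact absurd (hUS ▸ U.2) (by omega)

lemma mulVec_VSet_apply (D : ℕ) (T : Set (Fin n → ZMod 2))
    (c : {S : Finset (Fin n) // S.card ≤ D} → ZMod 2) (x : T) :
    (VSet D T).mulVec c x = ofAnfCoeffs D c x := by
  simp [Matrix.mulVec, dotProduct, VSet, ofAnfCoeffs, Fintype.linearCombination_apply, monomial,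
    mul_comm]

lemma not_injective_mulVec_VSet_of_card_lt {D : ℕ} {T : Set (Fin n → ZMod 2)}
    (h : Nat.card T < Nat.card {S : Finset (Fin n) // S.card ≤ D}) :
    ¬ Function.Injective (VSet D T).mulVec := fun hinj => by
  have hle := Nat.card_le_card_of_injective _ hinj
  rw [Nat.card_fun, Nat.card_fun, Nat.card_zmod] at hle
  exact hle.not_gt (Nat.pow_lt_pow_right one_lt_two h)

lemma exists_annihilator_of_not_injective {f : (Fin n → ZMod 2) → ZMod 2} {D : ℕ}
    (h : ¬ Function.Injective (VSet D {x | f x = 1}).mulVec) :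
    ∃ g, IsAnnihilator f g ∧ degB g ≤ D := by
  obtain ⟨c, c', hcc, hne⟩ := Function.not_injective_iff.1 h
  refine ⟨ofAnfCoeffs D (c - c'), ⟨?_, fun x => ?_⟩, degB_ofAnfCoeffs_le D _⟩
  · rw [map_sub, sub_ne_zero]
    exact (ofAnfCoeffs_injective D).ne hne
  · by_cases hx : f x = 1
    · have hxc := congrFun hcc ⟨x, hx⟩
      rw [mulVec_VSet_apply, mulVec_VSet_apply] at hxc
      simp [hxc]
    · have hbool : ∀ v : ZMod 2, v ≠ 1 → v = 0 := by decide
      rw [hbool _ hx, zero_mul]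

lemma le_degB_add_of_surjective {E : ℕ} {T : Set (Fin n → ZMod 2)}
    (hsurj : Function.Surjective (VSet E T).mulVec) {g : (Fin n → ZMod 2) → ZMod 2}
    (hg : g ≠ 0) (hgT : ∀ x, g x ≠ 0 → x ∈ T) : n ≤ degB g + E := by
  obtain ⟨x₀, hx₀⟩ := Function.ne_iff.1 hg
  obtain ⟨c, hc⟩ := hsurj fun y => if y.1 = x₀ then 1 else 0
  have hsynth (x : Fin n → ZMod 2) (hx : x ∈ T) :
      ofAnfCoeffs E c x = if x = x₀ then 1 else 0 := by
    rw [← mulVec_VSet_apply E T c ⟨x, hx⟩, hc]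
  have hsum : ∑ x, (g * ofAnfCoeffs E c) x = g x₀ := by
    rw [Fintype.sum_eq_single x₀ fun x hx => ?_]
    · simp [hsynth x₀ (hgT x₀ hx₀)]
    · by_cases hgx : g x = 0
      · simp [hgx]
      · simp [hsynth x (hgT x hgx), hx]
  by_contra hlt
  refine hx₀ (hsum ▸ sum_eq_zero_of_degB_lt ((degB_mul_le _ _).trans_lt ?_))
  linarith [degB_ofAnfCoeffs_le E c]

lemma exists_annihilator_of_card_lt {f : (Fin n → ZMod 2) → ZMod 2} {D : ℕ}
    (h : Nat.card {x // f x = 1} < Nat.card {S : Finset (Fin n) // S.card ≤ D}) :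
    ∃ g, IsAnnihilator f g ∧ degB g ≤ D :=
  exists_annihilator_of_not_injective (not_injective_mulVec_VSet_of_card_lt h)

lemma le_degB_add_of_isAnnihilator_add_one {f : (Fin n → ZMod 2) → ZMod 2} {D : ℕ}
    (hcard : Nat.card {x // f x = 1} = Nat.card {S : Finset (Fin n) // S.card ≤ D})
    (hann : ∀ g, IsAnnihilator f g → D < degB g) {g : (Fin n → ZMod 2) → ZMod 2}
    (hg : IsAnnihilator (fun x => f x + 1) g) : n ≤ degB g + D := by
  have hinj : Function.Injective (VSet D {x | f x = 1}).mulVec := by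
    by_contra hninj
    obtain ⟨g', hg', hdeg⟩ := exists_annihilator_of_not_injective hninj
    exact (hann g' hg').not_ge hdeg
  have hsurj := ((Nat.bijective_iff_injective_and_card _).2
    ⟨hinj, by rw [Nat.card_fun, Nat.card_fun, ← hcard]; rfl⟩).2
  refine le_degB_add_of_surjective hsurj hg.1 fun x hx => ?_
  have hbool : ∀ v : ZMod 2, v + 1 = 0 → v = 1 := by decide
  exact hbool _ ((mul_eq_zero.1 (hg.2 x)).resolve_right hx)

lemma AI_eq_of_forall_le {f : (Fin n → ZMod 2) → ZMod 2} {d : ℕ}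
    (hf : ∀ g, IsAnnihilator f g → d ≤ degB g)
    (hf1 : ∀ g, IsAnnihilator (fun x => f x + 1) g → d ≤ degB g)
    {g : (Fin n → ZMod 2) → ZMod 2} (hg : IsAnnihilator f g) (hgd : degB g ≤ d) : AI f = d := by
  have hmem : d ∈ {d | ∃ g, (IsAnnihilator f g ∨ IsAnnihilator (fun x => f x + 1) g) ∧
      degB g = d} := ⟨g, Or.inl hg, le_antisymm hgd (hf g hg)⟩
  refine le_antisymm (Nat.sInf_le hmem) (le_csInf ⟨d, hmem⟩ ?_)
  rintro _ ⟨g', hg' | hg', rfl⟩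
  exacts [hf g' hg', hf1 g' hg']

end BooleanFunction

open BooleanFunction

/-- for odd `n = 2t+1` and balanced `f`, if `f` has no annihilator of degree
less than `t+1`, then neither has `f ⊕ 1`; consequently `AI(f) = t+1`. -/
theorem stmt_1 (n t : ℕ) (hn : n = 2 * t + 1) (f : (Fin n → ZMod 2) → ZMod 2)
    (hbal : Nat.card {x : Fin n → ZMod 2 // f x = 1} = 2 ^ (n - 1))
    (hann : ∀ g, IsAnnihilator f g → t + 1 ≤ degB g) :
    (∀ g, IsAnnihilator (fun x => f x + 1) g → t + 1 ≤ degB g) ∧ AI f = t + 1 := by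
  have hcard : Nat.card {x // f x = 1} = Nat.card {S : Finset (Fin n) // S.card ≤ t} := by
    rw [hbal, card_finset_card_le_half hn]
  have hann1 : ∀ g, IsAnnihilator (fun x => f x + 1) g → t + 1 ≤ degB g := fun g hg => by
    have := le_degB_add_of_isAnnihilator_add_one hcard hann hg
    omega
  obtain ⟨g, hg, hgd⟩ :=
    exists_annihilator_of_card_lt (hcard.trans_lt (card_finset_card_le_lt_succ (by omega)))
  exact ⟨hann1, AI_eq_of_forall_le hann hann1 hg hgd⟩
end

section
/- Let n = 2t+1 be an odd positive integer, let F be a Boolean function of n variables with AI(F) = t+1, enumerate 1_F = {Y_1,…,Y_{2^{n−1}}} and 0_F = {Z_1,…,Z_{2^{n−1}}}, and set W = V(0_F)·V(1_F)^{−1}. Fix 1 ≤ k ≤ 2^{n−1}, indices 1 ≤ i_1 < … < i_k ≤ 2^{n−1} and 1 ≤ j_1 < … < j_k ≤ 2^{n−1}, and let f be the Boolean function obtained from F by flipping the values at Z_{i_1},…,Z_{i_k}, Y_{j_1},…,Y_{j_k}. Then the 2^{n−1} × 2^{n−1} matrix V(1_f), whose rows are v(Z_{i_1}),…,v(Z_{i_k})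 together with v(Y) for Y ∈ 1_F \ {Y_{j_1},…,Y_{j_k}}, is invertible over F_2 if and only if the k × k submatrix of W with rows i_1,…,i_k and columns j_1,…,j_k is invertible over F_2. -/
open Function Matrix

namespace Matrix

variable {R : Type*} {l m n o κ : Type*}

theorem bijective_mulVec_submatrix_iff [NonUnitalNonAssocSemiring R] [Fintype n] [Fintype o]
    (M : Matrix m n R) (e₁ : l ≃ m) (e₂ : o ≃ n) :
    Bijective (M.submatrix e₁ e₂).mulVec ↔ Bijective M.mulVec := by
  have hcomp : (M.submatrix e₁ e₂).mulVec =
      (e₁.symm.arrowCongr (Equiv.refl R)) ∘ M.mulVec ∘ (e₂.arrowCongr (Equiv.refl R)) :=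
    funext fun v => submatrix_mulVec_equiv M v e₁ e₂
  rw [hcomp, Equiv.comp_bijective, Equiv.bijective_comp]

theorem bijective_mulVec_mul_iff [NonUnitalSemiring R] [Fintype m] [Fintype n] (B : Matrix l m R)
    {A : Matrix m n R} (hA : Bijective A.mulVec) :
    Bijective (B * A).mulVec ↔ Bijective B.mulVec := by
  have hcomp : (B * A).mulVec = B.mulVec ∘ A.mulVec := funext fun v => (mulVec_mulVec v B A).symm
  rw [hcomp, Bijective.of_comp_iff _ hA]

theorem bijective_mulVec_iff_isUnit_det [CommRing R] [Fintype m] [DecidableEq m]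
    (A : Matrix m m R) :
    Bijective A.mulVec ↔ IsUnit A.det := by
  rw [← isUnit_iff_isUnit_det]
  exact ⟨fun h => mulVec_surjective_iff_isUnit.mp h.2,
    fun h => ⟨mulVec_injective_of_isUnit h, mulVec_surjective_iff_isUnit.mpr h⟩⟩

theorem bijective_mulVec_fromRows_replace_iff [CommRing R] [Fintype m] [Fintype n]
    [DecidableEq n] [Fintype κ] [DecidableEq κ] {V : Matrix n m R} (hV : Bijective V.mulVec)
    (W : Matrix n n R) (i j : κ → n) (hj : Injective j) :
    Bijective (fromRows ((W * V).submatrix i id)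
        (V.submatrix ((↑) : ↥(Set.range j)ᶜ → n) id)).mulVec ↔ IsUnit (W.submatrix i j).det := by
  classical
  let e : κ ⊕ ↥(Set.range j)ᶜ ≃ n :=
    ((Equiv.ofInjective j hj).sumCongr (Equiv.refl _)).trans (Equiv.Set.sumCompl _)
  have hsplit : fromRows ((W * V).submatrix i id) (V.submatrix ((↑) : ↥(Set.range j)ᶜ → n) id)
      = fromRows (W.submatrix i id) ((1 : Matrix n n R).submatrix (↑) id) * V := by
    ext (a | b) c <;> simp [mul_apply, one_apply]
  have hblocks : (fromRows (W.submatrix i id)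
      ((1 : Matrix n n R).submatrix ((↑) : ↥(Set.range j)ᶜ → n) id)).submatrix id e =
        fromBlocks (W.submatrix i j) (W.submatrix i ((↑) : ↥(Set.range j)ᶜ → n)) 0 1 := by
    ext (a | b) (c | d) <;> simp [e, one_apply, ← Subtype.ext_iff]
    exact fun h => absurd ⟨c, h.symm⟩ b.2
  rw [hsplit, bijective_mulVec_mul_iff _ hV, ← bijective_mulVec_submatrix_iff _ (Equiv.refl _) e,
    Equiv.coe_refl, hblocks, bijective_mulVec_iff_isUnit_det, det_fromBlocks_zero₂₁, det_one,
    mul_one]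

end Matrix

theorem card_finset_card_le_eq_two_pow {n t : ℕ} (hn : n = 2 * t + 1) :
    Fintype.card {S : Finset (Fin n) // S.card ≤ t} = 2 ^ (n - 1) := by
  have hfiber : ∀ d ∈ Finset.range (t + 1),
      (Finset.univ.filter fun S : Finset (Fin n) => S.card ≤ t ∧ S.card = d).card =
        n.choose d := by
    intro d hd
    have hd := Finset.mem_range.mp hd
    have hfilter : (Finset.univ.filter fun S : Finset (Fin n) => S.card ≤ t ∧ S.card = d) =
        Finset.powersetCard d Finset.univ := by
      ext S
      simp only [Finset.mem_filter, Finset.mem_univ, true_and, Finset.mem_powersetCard,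
        Finset.subset_univ]
      omega
    rw [hfilter, Finset.card_powersetCard, Finset.card_univ, Fintype.card_fin]
  rw [Fintype.card_subtype, Finset.card_eq_sum_card_fiberwise (f := Finset.card)
    (t := Finset.range (t + 1))
    fun S hS => Finset.mem_range.mpr (Nat.lt_succ_of_le (Finset.mem_filter.mp hS).2)]
  simp_rw [Finset.filter_filter]
  rw [Finset.sum_congr rfl hfiber, hn, Nat.sum_range_choose_halfway, Nat.add_sub_cancel, pow_mul]
  norm_num

section BooleanFunction

variable {n : ℕ}

theorem anfCoeff_monomial (T S : Finset (Fin n)) :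
    anfCoeff (fun x => ∏ i ∈ T, x i) S = if T = S then 1 else 0 := by
  have hsupp : Finset.univ.filter (fun x : Fin n → ZMod 2 => ∀ i, x i = 1 → i ∈ S) =
      Fintype.piFinset fun i => if i ∈ S then Finset.univ else {0} := by
    ext x
    simp only [Finset.mem_filter, Finset.mem_univ, true_and, Fintype.mem_piFinset]
    refine forall_congr' fun i => ?_
    by_cases hi : i ∈ S <;>
      simp only [hi, if_true, if_false, Finset.mem_univ, Finset.mem_singleton]
    · simp
    · generalize x i = a
      revert a; decide
  have hfactor : ∀ i,
      ∑ a ∈ (if i ∈ S then Finset.univ else {0}), (if i ∈ T then a else 1) =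
        if (i ∈ T ↔ i ∈ S) then (1 : ZMod 2) else 0 := by
    intro i
    by_cases hS : i ∈ S <;> by_cases hT : i ∈ T <;> simp [hS, hT] <;> decide
  unfold anfCoeff
  -- the sum over `x` factors into one sum over each coordinate `x i`
  simp_rw [hsupp, ← Finset.prod_ite_mem_eq T]
  rw [← Finset.prod_univ_sum (fun i => if i ∈ S then Finset.univ else {0})
    (fun i a => if i ∈ T then a else 1)]
  simp_rw [hfactor, Finset.prod_boole, Finset.mem_univ, true_implies, ← Finset.ext_iff]

theorem anfCoeff_sum_mul {ι : Type*} [Fintype ι] (c : ι → ZMod 2)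
    (f : ι → (Fin n → ZMod 2) → ZMod 2) (S : Finset (Fin n)) :
    anfCoeff (fun x => ∑ a, c a * f a x) S = ∑ a, c a * anfCoeff (f a) S := by
  unfold anfCoeff
  rw [Finset.sum_comm]
  simp_rw [Finset.mul_sum]

def lowDegreePoly (D : ℕ) (v : {S : Finset (Fin n) // S.card ≤ D} → ZMod 2) :
    (Fin n → ZMod 2) → ZMod 2 :=
  fun x => ∑ S, v S * ∏ i ∈ S.1, x i

variable {D : ℕ} {v : {S : Finset (Fin n) // S.card ≤ D} → ZMod 2}

theorem anfCoeff_lowDegreePoly (S : Finset (Fin n)) :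
    anfCoeff (lowDegreePoly D v) S = if h : S.card ≤ D then v ⟨S, h⟩ else 0 := by
  unfold lowDegreePoly
  rw [anfCoeff_sum_mul]
  simp_rw [anfCoeff_monomial, mul_ite, mul_one, mul_zero]
  split_ifs with h
  · rw [Fintype.sum_eq_single ⟨S, h⟩ fun T hT => if_neg fun hTS => hT (Subtype.ext hTS),
      if_pos rfl]
  · exact Finset.sum_eq_zero fun T _ => if_neg fun (hT : T.1 = S) => h (hT ▸ T.2)

theorem degB_lowDegreePoly_le : degB (lowDegreePoly D v) ≤ D :=
  Finset.sup_le fun S hS => by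
    rw [Finset.mem_filter, anfCoeff_lowDegreePoly] at hS
    by_contra h
    exact hS.2 (dif_neg h)

theorem lowDegreePoly_ne_zero (hv : v ≠ 0) : lowDegreePoly D v ≠ 0 := by
  obtain ⟨S, hS⟩ := Function.ne_iff.mp hv
  intro h0
  have hcoeff := anfCoeff_lowDegreePoly (v := v) S.1
  rw [h0, dif_pos S.2] at hcoeff
  exact hS (hcoeff.symm.trans (by simp [anfCoeff]))

theorem lowDegreePoly_apply {N : ℕ} (Y : Fin N → Fin n → ZMod 2) (r : Fin N) :
    lowDegreePoly D v (Y r) = (VEnum D Y *ᵥ v) r := by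
  simp [lowDegreePoly, VEnum, mulVec, dotProduct, mul_comm]

theorem AI_le_degB {F g : (Fin n → ZMod 2) → ZMod 2} (hg : IsAnnihilator F g) :
    AI F ≤ degB g :=
  Nat.sInf_le ⟨g, Or.inl hg, rfl⟩

theorem injective_mulVec_VEnum_of_lt_AI {F : (Fin n → ZMod 2) → ZMod 2} (hD : D < AI F)
    {N : ℕ} {Y : Fin N → Fin n → ZMod 2} (hY : {x | F x = 1} ⊆ Set.range Y) :
    Injective (VEnum D Y).mulVec := by
  rw [← coe_mulVecLin, injective_iff_map_eq_zero]
  intro v hv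
  by_contra hv0
  have hann : IsAnnihilator F (lowDegreePoly D v) := by
    refine ⟨lowDegreePoly_ne_zero hv0, fun x => ?_⟩
    by_cases hx : F x = 1
    · obtain ⟨r, rfl⟩ := hY hx
      rw [lowDegreePoly_apply, show VEnum D Y *ᵥ v = 0 from hv, Pi.zero_apply, mul_zero]
    · rw [(by decide : ∀ a : ZMod 2, a ≠ 1 → a = 0) _ hx, zero_mul]
  exact (AI_le_degB hann).not_gt (degB_lowDegreePoly_le.trans_lt hD)

theorem bijective_mulVec_VEnum_of_lt_AI {F : (Fin n → ZMod 2) → ZMod 2} (hD : D < AI F)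
    {N : ℕ} (hN : Fintype.card {S : Finset (Fin n) // S.card ≤ D} = N)
    {Y : Fin N → Fin n → ZMod 2} (hY : {x | F x = 1} ⊆ Set.range Y) :
    Bijective (VEnum D Y).mulVec := by
  have hinj := injective_mulVec_VEnum_of_lt_AI hD hY
  rw [← coe_mulVecLin] at hinj ⊢
  refine ⟨hinj, (LinearMap.injective_iff_surjective_of_finrank_eq_finrank ?_).mp hinj⟩
  simp [hN]

end BooleanFunction

theorem setOf_flip_eq_range {n k : ℕ} {ι : Type*} {F : (Fin n → ZMod 2) → ZMod 2}
    {Y Z : ι → Fin n → ZMod 2} (hYinj : Injective Y) (hYran : Set.range Y = {x | F x = 1})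
    (hZran : Set.range Z = {x | F x = 0}) (i j : Fin k → ι) :
    {X | (if (∃ a, Z (i a) = X) ∨ (∃ a, Y (j a) = X) then F X + 1 else F X) = 1} =
      Set.range (Sum.elim (Z ∘ i) (Y ∘ ((↑) : ↥(Set.range j)ᶜ → ι))) := by
  have hFY : ∀ r, F (Y r) = 1 := fun r => hYran.subset ⟨r, rfl⟩
  have hFZ : ∀ r, F (Z r) = 0 := fun r => hZran.subset ⟨r, rfl⟩
  have hYZ : ∀ r s, Y r ≠ Z s := fun r s h => by simpa [hFY, hFZ] using congrArg F h
  ext X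
  have hcover : X ∈ Set.range Z ∨ X ∈ Set.range Y := by
    rw [hZran, hYran]
    exact (by decide : ∀ a : ZMod 2, a = 0 ∨ a = 1) (F X)
  rcases hcover with ⟨r, rfl⟩ | ⟨r, rfl⟩
  · simp [hFZ, hYZ, Set.Sum.elim_range]
  · simp [hFY, (hYZ _ _).symm, Set.Sum.elim_range, hYinj.eq_iff]

theorem stmt_8_general (n t : ℕ) (hn : n = 2 * t + 1)
    (F : (Fin n → ZMod 2) → ZMod 2) (hF : AI F = t + 1)
    (Y Z : Fin (2 ^ (n - 1)) → (Fin n → ZMod 2))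
    (hYinj : Function.Injective Y) (hYran : Set.range Y = {x | F x = 1})
    (hZinj : Function.Injective Z) (hZran : Set.range Z = {x | F x = 0})
    (W : Matrix (Fin (2 ^ (n - 1))) (Fin (2 ^ (n - 1))) (ZMod 2))
    (hW : W * VEnum t Y = VEnum t Z)
    (k : ℕ)
    (i j : Fin k → Fin (2 ^ (n - 1))) (hi : StrictMono i) (hj : StrictMono j) :
    Function.Bijective (Matrix.mulVecLin (VSet t
        {X | (if (∃ a, Z (i a) = X) ∨ (∃ a, Y (j a) = X) then F X + 1 else F X) = 1}))
      ↔ IsUnit (W.submatrix i j).det := by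
  have hZY : ∀ r s, Z r ≠ Y s := fun r s => ne_of_apply_ne F <| by
    rw [show F (Z r) = 0 from hZran.subset ⟨r, rfl⟩,
      show F (Y s) = 1 from hYran.subset ⟨s, rfl⟩]
    exact zero_ne_one
  have hrows :
      Injective (Sum.elim (Z ∘ i) (Y ∘ ((↑) : ↥(Set.range j)ᶜ → Fin (2 ^ (n - 1))))) :=
    (hZinj.comp hi.injective).sumElim (hYinj.comp Subtype.val_injective) fun _ _ => hZY _ _
  let e := (Equiv.ofInjective _ hrows).trans
    (Equiv.setCongr (setOf_flip_eq_range hYinj hYran hZran i j).symm)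
  have hV_onset : Bijective (VEnum t Y).mulVec :=
    bijective_mulVec_VEnum_of_lt_AI (hF ▸ Nat.lt_succ_self t)
      (card_finset_card_le_eq_two_pow hn) hYran.ge
  have hV_flip : (VSet t _).submatrix e (Equiv.refl _) = fromRows ((W * VEnum t Y).submatrix i id)
      ((VEnum t Y).submatrix ((↑) : ↥(Set.range j)ᶜ → Fin (2 ^ (n - 1))) id) := by
    rw [hW]
    ext (a | b) S <;> rfl
  rw [coe_mulVecLin, ← bijective_mulVec_submatrix_iff _ e (Equiv.refl _), hV_flip]
  exact bijective_mulVec_fromRows_replace_iff hV_onset W i j hj.injective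

/-- with `W = V(0_F) · V(1_F)⁻¹` and `f` obtained from `F` by flipping the
values at `Z_{i₁},…,Z_{i_k},Y_{j₁},…,Y_{j_k}`, the matrix `V(1_f)` is invertible over `F_2`
iff the `k × k` submatrix of `W` with rows `i₁,…,i_k` and columns `j₁,…,j_k` is invertible. -/
theorem stmt_8 (n t : ℕ) (hn : n = 2 * t + 1)
    (F : (Fin n → ZMod 2) → ZMod 2) (hF : AI F = t + 1)
    (Y Z : Fin (2 ^ (n - 1)) → (Fin n → ZMod 2))
    (hYinj : Function.Injective Y) (hYran : Set.range Y = {x | F x = 1})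
    (hZinj : Function.Injective Z) (hZran : Set.range Z = {x | F x = 0})
    (W : Matrix (Fin (2 ^ (n - 1))) (Fin (2 ^ (n - 1))) (ZMod 2))
    (hW : W * VEnum t Y = VEnum t Z)
    (k : ℕ) (hk1 : 1 ≤ k) (hk2 : k ≤ 2 ^ (n - 1))
    (i j : Fin k → Fin (2 ^ (n - 1))) (hi : StrictMono i) (hj : StrictMono j) :
    Function.Bijective (Matrix.mulVecLin (VSet t
        {X | (if (∃ a, Z (i a) = X) ∨ (∃ a, Y (j a) = X) then F X + 1 else F X) = 1}))
      ↔ IsUnit (W.submatrix i j).det :=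
  stmt_8_general n t hn F hF Y Z hYinj hYran hZinj hZran W hW k i j hi hj
end
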